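/- Let E₁ ⊆ E₂ ⊆ ⋯ be a sequence of locally convex topological vector spaces with continuous linear inclusion maps E_n → E_{n+1}, and let E := ⋃_n E_n carry the locally convex direct limit topology. Let U_n ⊆ E_n be open convex subsets with U₁ ⊆ U₂ ⊆ ⋯, and set U := ⋃_n U_n, which is open in E. Let F be a locally convex space and f : U → F a function such that for each n, the restriction f|_{U_n} is Lipschitz continuous as a map U_n ⊆ E_n → F (i.e., for every continuous seminorm p on F there is a continuous seminorm q on E_n with p(f(x)−f(y)) ≤ q(x−y) for all x,y ∈ U_n). Then f is continuous on U with respect to the direct limit topology. -/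

import Mathlib

/-!
Fix `a = ι m x₀` with `x₀ ∈ Un m` and a continuous seminorm `P` on `F`. Starting from `{a}`,
thicken step by step: at stage `k` add a `Q (m + k)`-ball of radius `2⁻¹ ^ (k + 1)` in
`E (m + k)`, where `Q (m + k)` is a Lipschitz seminorm for `P`, and cut back to the image of
`Un (m + k)`. The stages are convex and increase, and by the Lipschitz estimate `P (f z - f a)`
stays below `2⁻¹ + 2⁻² + ⋯ < 1` on all of them. The trace of a stage on the space where it was
thickened is open, hence so are its traces on all earlier spaces (pull back along the bonding
maps). So the union of the stages is convex with open traces on every `E n`: it is open in the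
direct limit topology, and `f` maps it into the `P`-ball of radius `1` around `f a`.
-/

open Set Filter Topology Pointwise

theorem Seminorm.exists_continuous_ball_subset {F : Type*} [AddCommGroup F] [Module ℝ F]
    [TopologicalSpace F] [IsTopologicalAddGroup F] [ContinuousSMul ℝ F]
    [LocallyConvexSpace ℝ F] {W : Set F} (hW : W ∈ 𝓝 0) :
    ∃ P : Seminorm ℝ F, Continuous P ∧ P.ball 0 1 ⊆ W := by
  obtain ⟨S, ⟨hS0, hSo, hSbal, hSconv⟩, hSW⟩ :=
    (nhds_hasBasis_absConvex_open ℝ F).mem_iff.mp hW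
  let P := gaugeSeminorm hSbal hSconv (absorbent_nhds_zero (hSo.mem_nhds hS0))
  have hPS : P.ball 0 1 = S := gaugeSeminorm_ball_one hSo
  exact ⟨P, Seminorm.continuous (r := 1) (hPS ▸ hSo.mem_nhds hS0), hPS.subset.trans hSW⟩

theorem continuousAt_of_forall_seminorm {X F : Type*} [TopologicalSpace X] [AddCommGroup F]
    [Module ℝ F] [TopologicalSpace F] [IsTopologicalAddGroup F] [ContinuousSMul ℝ F]
    [LocallyConvexSpace ℝ F] {f : X → F} {a : X}
    (h : ∀ P : Seminorm ℝ F, Continuous P → ∀ᶠ z in 𝓝 a, P (f z - f a) < 1) :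
    ContinuousAt f a := by
  rw [ContinuousAt, ← tendsto_sub_nhds_zero_iff]
  intro W hW
  obtain ⟨P, hPc, hPW⟩ := Seminorm.exists_continuous_ball_subset hW
  exact mem_map.mpr ((h P hPc).mono fun z hz ↦ hPW (P.mem_ball_zero.mpr hz))

theorem Set.preimage_add_image {G H M : Type*} [AddGroup G] [AddGroup H] [FunLike M G H]
    [AddMonoidHomClass M G H] (φ : M) (A : Set H) (B : Set G) :
    φ ⁻¹' (A + φ '' B) = φ ⁻¹' A + B := by
  ext x
  constructor
  · rintro ⟨v, hv, _, ⟨b, hb, rfl⟩, hx⟩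
    refine ⟨x - b, ?_, b, hb, sub_add_cancel x b⟩
    rwa [mem_preimage, map_sub, ← hx, add_sub_cancel_right]
  · rintro ⟨y, hy, b, hb, rfl⟩
    exact ⟨φ y, hy, φ b, mem_image_of_mem φ hb, (map_add φ y b).symm⟩

section ThickenWithin

variable {G H : Type*} [AddCommGroup G] [Module ℝ G] [AddCommGroup H] [Module ℝ H]
  (ι : G →ₗ[ℝ] H) (U : Set G) (Q : Seminorm ℝ G) (r : ℝ) (A : Set H)

def thickenWithin : Set H := (A + ι '' Q.ball 0 r) ∩ ι '' U

variable {ι U Q r A}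

theorem thickenWithin_subset : thickenWithin ι U Q r A ⊆ ι '' U := inter_subset_right

theorem subset_thickenWithin (hA : A ⊆ ι '' U) (hr : 0 < r) : A ⊆ thickenWithin ι U Q r A :=
  fun v hv ↦ ⟨⟨v, hv, 0, ⟨0, Q.mem_ball_self hr, map_zero ι⟩, add_zero v⟩, hA hv⟩

theorem Convex.thickenWithin (hA : Convex ℝ A) (hU : Convex ℝ U) :
    Convex ℝ (thickenWithin ι U Q r A) :=
  (hA.add ((Q.convex_ball 0 r).linear_image ι)).inter (hU.linear_image ι)

theorem isOpen_preimage_thickenWithin [TopologicalSpace G] [IsTopologicalAddGroup G]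
    (hι : Function.Injective ι) (hQ : Continuous Q) (hU : IsOpen U) :
    IsOpen (ι ⁻¹' thickenWithin ι U Q r A) := by
  rw [thickenWithin, preimage_inter, preimage_add_image, hι.preimage_image]
  exact (Q.ball_zero_eq ▸ isOpen_lt hQ continuous_const).add_left.inter hU

theorem exists_seminorm_sub_lt_of_mem_thickenWithin {F : Type*} [AddCommGroup F] [Module ℝ F]
    {P : Seminorm ℝ F} {f : H → F} (hι : Function.Injective ι) (hA : A ⊆ ι '' U)
    (hlip : ∀ x ∈ U, ∀ y ∈ U, P (f (ι x) - f (ι y)) ≤ Q (x - y)) {z : H}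
    (hz : z ∈ thickenWithin ι U Q r A) : ∃ v ∈ A, P (f z - f v) < r := by
  obtain ⟨⟨v, hv, _, ⟨b, hb, rfl⟩, rfl⟩, u, hu, hvb⟩ := hz
  obtain ⟨u', hu', rfl⟩ := hA hv
  obtain rfl : u = u' + b := hι (by rw [hvb, map_add])
  refine ⟨ι u', hv, ?_⟩
  calc P (f (ι u' + ι b) - f (ι u')) = P (f (ι (u' + b)) - f (ι u')) := by rw [map_add]
    _ ≤ Q (u' + b - u') := hlip _ hu _ hu'
    _ < r := by simpa using hb

end ThickenWithin

section DirectSequence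

variable {E : ℕ → Type*} [∀ n, TopologicalSpace (E n)] {EL : Type*}
  (ι : ∀ n, E n → EL) {j : ∀ n, E n → E (n + 1)}

theorem isOpen_preimage_of_le (hj : ∀ n x, ι (n + 1) (j n x) = ι n x)
    (hjc : ∀ n, Continuous (j n)) {S : Set EL} {n N : ℕ} (hnN : n ≤ N)
    (hS : IsOpen (ι N ⁻¹' S)) : IsOpen (ι n ⁻¹' S) := by
  induction N, hnN using Nat.le_induction with
  | base => exact hS
  | succ N _ ih =>
    have hpre : ι N ⁻¹' S = j N ⁻¹' (ι (N + 1) ⁻¹' S) := by ext x; simp [hj]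
    exact ih (hpre ▸ hS.preimage (hjc N))

theorem isOpen_iUnion_of_isOpen_preimage [TopologicalSpace EL] [AddCommGroup EL]
    [Module ℝ EL]
    (hfinest : ∀ V : Set EL, Convex ℝ V → (∀ n, IsOpen (ι n ⁻¹' V)) → IsOpen V)
    (hj : ∀ n x, ι (n + 1) (j n x) = ι n x) (hjc : ∀ n, Continuous (j n)) {V : ℕ → Set EL}
    (m : ℕ) (hmono : Monotone V) (hconv : ∀ k, Convex ℝ (V k))
    (hopen : ∀ k, IsOpen (ι (m + k) ⁻¹' V k)) : IsOpen (⋃ k, V k) := by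
  refine hfinest _ (hmono.directed_le.convex_iUnion hconv) fun n ↦ ?_
  rw [← hmono.iUnion_nat_add n, preimage_iUnion]
  exact isOpen_iUnion fun k ↦ isOpen_preimage_of_le ι hj hjc (by omega) (hopen (k + n))

end DirectSequence

section ThickenChain

variable {E : ℕ → Type*} [∀ n, AddCommGroup (E n)] [∀ n, Module ℝ (E n)]
  {EL : Type*} [AddCommGroup EL] [Module ℝ EL]
  (ι : ∀ n, E n →ₗ[ℝ] EL) (U : ∀ n, Set (E n)) (Q : ∀ n, Seminorm ℝ (E n))
  (m : ℕ) (a : EL)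

def thickenChain : ℕ → Set EL
  | 0 => {a}
  | k + 1 =>
    thickenWithin (ι (m + k)) (U (m + k)) (Q (m + k)) (2⁻¹ ^ (k + 1)) (thickenChain k)

variable {ι U Q m a}

theorem thickenChain_subset (hUincr : ∀ n, ι n '' U n ⊆ ι (n + 1) '' U (n + 1))
    (ha : a ∈ ι m '' U m) : ∀ k, thickenChain ι U Q m a k ⊆ ι (m + k) '' U (m + k)
  | 0 => singleton_subset_iff.mpr ha
  | _ + 1 => thickenWithin_subset.trans (hUincr _)

theorem monotone_thickenChain (hUincr : ∀ n, ι n '' U n ⊆ ι (n + 1) '' U (n + 1))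
    (ha : a ∈ ι m '' U m) : Monotone (thickenChain ι U Q m a) :=
  monotone_nat_of_le_succ fun k ↦
    subset_thickenWithin (thickenChain_subset hUincr ha k) (by positivity)

theorem convex_thickenChain (hUc : ∀ n, Convex ℝ (U n)) :
    ∀ k, Convex ℝ (thickenChain ι U Q m a k)
  | 0 => convex_singleton a
  | k + 1 => (convex_thickenChain hUc k).thickenWithin (hUc (m + k))

theorem seminorm_sub_le_of_mem_thickenChain {F : Type*} [AddCommGroup F] [Module ℝ F]
    {P : Seminorm ℝ F} {f : EL → F} (hιinj : ∀ n, Function.Injective (ι n))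
    (hUincr : ∀ n, ι n '' U n ⊆ ι (n + 1) '' U (n + 1))
    (hlip : ∀ n, ∀ x ∈ U n, ∀ y ∈ U n, P (f (ι n x) - f (ι n y)) ≤ Q n (x - y))
    (ha : a ∈ ι m '' U m) :
    ∀ k, ∀ z ∈ thickenChain ι U Q m a k, P (f z - f a) ≤ 1 - 2⁻¹ ^ k
  | 0, z, hz => by simp [mem_singleton_iff.mp hz]
  | k + 1, z, hz => by
    obtain ⟨v, hv, hzv⟩ := exists_seminorm_sub_lt_of_mem_thickenWithin (hιinj (m + k))
      (thickenChain_subset hUincr ha k) (hlip (m + k)) hz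
    calc P (f z - f a) ≤ P (f z - f v) + P (f v - f a) := by
          simpa using map_add_le_add P (f z - f v) (f v - f a)
      _ ≤ 2⁻¹ ^ (k + 1) + (1 - 2⁻¹ ^ k) :=
          add_le_add hzv.le (seminorm_sub_le_of_mem_thickenChain hιinj hUincr hlip ha k v hv)
      _ = 1 - 2⁻¹ ^ (k + 1) := by ring

end ThickenChain

theorem directLimit_lipschitz_continuous
    {E : ℕ → Type*} [∀ n, AddCommGroup (E n)] [∀ n, Module ℝ (E n)]
    [∀ n, TopologicalSpace (E n)] [∀ n, IsTopologicalAddGroup (E n)]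
    {EL : Type*} [AddCommGroup EL] [Module ℝ EL] [TopologicalSpace EL]
    (ι : ∀ n, E n →ₗ[ℝ] EL)
    (hιinj : ∀ n, Function.Injective (ι n))
    (hstep : ∀ n, ∃ j : E n →ₗ[ℝ] E (n + 1), Continuous j ∧ ∀ x, ι (n + 1) (j x) = ι n x)
    (hfinest : ∀ V : Set EL, Convex ℝ V → (∀ n, IsOpen (ι n ⁻¹' V)) → IsOpen V)
    {F : Type*} [AddCommGroup F] [Module ℝ F] [TopologicalSpace F]
    [IsTopologicalAddGroup F] [ContinuousSMul ℝ F] [LocallyConvexSpace ℝ F]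
    (Un : ∀ n, Set (E n)) (hUo : ∀ n, IsOpen (Un n)) (hUc : ∀ n, Convex ℝ (Un n))
    (hUincr : ∀ n, ι n '' Un n ⊆ ι (n + 1) '' Un (n + 1))
    (f : EL → F)
    (hlip : ∀ (n : ℕ) (P : Seminorm ℝ F), Continuous P →
      ∃ Q : Seminorm ℝ (E n), Continuous Q ∧
        ∀ x ∈ Un n, ∀ y ∈ Un n, P (f (ι n x) - f (ι n y)) ≤ Q (x - y)) :
    ContinuousOn f (⋃ n, ι n '' Un n) := by
  choose j hjc hjι using hstep
  intro a ha
  obtain ⟨m, x₀, hx₀, rfl⟩ : ∃ m, ∃ x₀ ∈ Un m, ι m x₀ = a := by simpa using ha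
  refine (continuousAt_of_forall_seminorm fun P hP ↦ ?_).continuousWithinAt
  choose Q hQc hQ using fun n ↦ hlip n P hP
  have ha : ι m x₀ ∈ ι m '' Un m := mem_image_of_mem _ hx₀
  -- stage `0` is `{ι m x₀}`, whose traces are not open
  let V := ⋃ k, thickenChain ι Un Q m (ι m x₀) (k + 1)
  have hVopen : IsOpen V :=
    isOpen_iUnion_of_isOpen_preimage (ι ·) hfinest hjι hjc m
      (fun _ _ hkl ↦ monotone_thickenChain hUincr ha (Nat.succ_le_succ hkl))
      (fun k ↦ convex_thickenChain hUc (k + 1))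
      fun k ↦ isOpen_preimage_thickenWithin (hιinj (m + k)) (hQc (m + k)) (hUo (m + k))
  have haV : ι m x₀ ∈ V :=
    mem_iUnion.mpr ⟨0, subset_thickenWithin (singleton_subset_iff.mpr ha) (by norm_num) rfl⟩
  filter_upwards [hVopen.mem_nhds haV] with z hz
  obtain ⟨k, hzk⟩ := mem_iUnion.mp hz
  calc P (f z - f (ι m x₀)) ≤ 1 - 2⁻¹ ^ (k + 1) :=
        seminorm_sub_le_of_mem_thickenChain hιinj hUincr hQ ha (k + 1) z hzk
    _ < 1 := by linarith [pow_pos (by norm_num : (0 : ℝ) < 2⁻¹) (k + 1)]
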